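/- arXiv:1102.3502 — 6 statements merged into one kernel-verified Lean document; each statement's English description precedes it below -/
import Mathlib

section
/- If g₁,…,g_m : [0,∞) → ℝ are nonnegative square-integrable functions, then the time-ordered integral Υ_T[g₁,…,g_m] := ∫₀ᵀ g₁(t₁) ∫₀^{t₁} g₂(t₂) ⋯ ∫₀^{t_{m-1}} g_m(t_m) dt_m⋯dt₁ satisfies Υ_T[g₁,…,g_m] ≤ T^{m/2} ‖g₁‖_{L²} ⋯ ‖g_m‖_{L²}. -/
open MeasureTheory intervalIntegral

/-- The time-ordered iterated integral
`Υ_T[g₁,…,g_m] = ∫₀ᵀ g₁(t₁) ∫₀^{t₁} g₂(t₂) ⋯ ∫₀^{t_{m-1}} g_m(t_m) dt_m⋯dt₁`. -/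
noncomputable def Ups : ℝ → List (ℝ → ℝ) → ℝ
  | _, [] => 1
  | T, g :: gs => ∫ t in (0:ℝ)..T, g t * Ups t gs

/-- The L² norm of a real function on `[0,∞)`. -/
noncomputable def L2NormIoi (g : ℝ → ℝ) : ℝ :=
  Real.sqrt (∫ t in Set.Ioi (0:ℝ), (g t) ^ 2)

/-!
Induction on the number of factors. For `t ∈ [0, T]` the inner integral `Υ_t[g₂,…,g_m]` is at
most `T^{(m-1)/2} ‖g₂‖ ⋯ ‖g_m‖`, so `Υ_T[g₁,…,g_m]` is at most that constant times `∫₀ᵀ g₁`,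
and Cauchy–Schwarz against the constant function `1` bounds `∫₀ᵀ g₁` by `√T ‖g₁‖_{L²}`.
-/

section CauchySchwarz

variable {α : Type*} [MeasurableSpace α] {μ : Measure α}

theorem integral_le_sqrt_measureReal_mul_sqrt_integral_sq [IsFiniteMeasure μ] {f : α → ℝ}
    (hf0 : 0 ≤ᵐ[μ] f) (hf : MemLp f 2 μ) :
    ∫ a, f a ∂μ ≤ √(μ.real Set.univ) * √(∫ a, f a ^ 2 ∂μ) := by
  have key := integral_mul_le_Lp_mul_Lq_of_nonneg .two_two (f := fun _ => (1:ℝ)) (μ := μ)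
    (Filter.Eventually.of_forall fun _ => zero_le_one) hf0 (by simpa using memLp_const 1)
    (by simpa using hf)
  simpa only [one_mul, one_pow, MeasureTheory.integral_const, smul_eq_mul, mul_one, Real.rpow_two,
    Real.sqrt_eq_rpow, one_div] using key

theorem aestronglyMeasurable_of_sq {g : α → ℝ} (hg0 : 0 ≤ᵐ[μ] g)
    (hg : AEStronglyMeasurable (fun a => g a ^ 2) μ) : AEStronglyMeasurable g μ := by
  refine (Real.continuous_sqrt.comp_aestronglyMeasurable hg).congr ?_
  filter_upwards [hg0] with a ha
  exact Real.sqrt_sq ha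

theorem memLp_two_of_nonneg_of_integrable_sq {g : α → ℝ} (hg0 : 0 ≤ᵐ[μ] g)
    (hg : Integrable (fun a => g a ^ 2) μ) : MemLp g 2 μ :=
  (memLp_two_iff_integrable_sq (aestronglyMeasurable_of_sq hg0 hg.aestronglyMeasurable)).2 hg

end CauchySchwarz

section IntervalIntegral

variable {g : ℝ → ℝ}

theorem memLp_two_restrict_Ioc_of_integrableOn_sq_Ioi {T : ℝ} (hg0 : ∀ t, 0 ≤ g t)
    (hg : IntegrableOn (fun t => g t ^ 2) (Set.Ioi 0)) :
    MemLp g 2 (volume.restrict (Set.Ioc 0 T)) :=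
  memLp_two_of_nonneg_of_integrable_sq (Filter.Eventually.of_forall hg0)
    (hg.mono_set Set.Ioc_subset_Ioi_self)

theorem intervalIntegrable_of_integrableOn_sq_Ioi {T : ℝ} (hT : 0 ≤ T) (hg0 : ∀ t, 0 ≤ g t)
    (hg : IntegrableOn (fun t => g t ^ 2) (Set.Ioi 0)) : IntervalIntegrable g volume 0 T := by
  rw [intervalIntegrable_iff_integrableOn_Ioc_of_le hT]
  exact (memLp_two_restrict_Ioc_of_integrableOn_sq_Ioi hg0 hg).integrable (by norm_num)

theorem integral_le_sqrt_mul_L2NormIoi {T : ℝ} (hT : 0 ≤ T) (hg0 : ∀ t, 0 ≤ g t)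
    (hg : IntegrableOn (fun t => g t ^ 2) (Set.Ioi 0)) :
    ∫ t in (0:ℝ)..T, g t ≤ √T * L2NormIoi g := by
  rw [integral_of_le hT]
  calc ∫ t in Set.Ioc 0 T, g t
      ≤ √((volume.restrict (Set.Ioc 0 T)).real Set.univ) * √(∫ t in Set.Ioc 0 T, g t ^ 2) :=
        integral_le_sqrt_measureReal_mul_sqrt_integral_sq (Filter.Eventually.of_forall hg0)
          (memLp_two_restrict_Ioc_of_integrableOn_sq_Ioi hg0 hg)
    _ ≤ √T * L2NormIoi g := by
        rw [measureReal_restrict_apply_univ, Real.volume_real_Ioc_of_le hT, sub_zero]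
        gcongr
        exact Real.sqrt_le_sqrt <| setIntegral_mono_set hg (Filter.Eventually.of_forall fun t => sq_nonneg _)
          Set.Ioc_subset_Ioi_self.eventuallyLE

theorem integral_mul_le_mul_integral_of_le {a b C : ℝ} {h : ℝ → ℝ} (hab : a ≤ b)
    (hg0 : ∀ t, 0 ≤ g t) (hg : IntervalIntegrable g volume a b) (hC : 0 ≤ C)
    (hh : ∀ t ∈ Set.Icc a b, h t ≤ C) :
    ∫ t in a..b, g t * h t ≤ C * ∫ t in a..b, g t := by
  by_cases hgh : IntervalIntegrable (fun t => g t * h t) volume a b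
  · rw [← intervalIntegral.integral_const_mul]
    refine integral_mono_on hab hgh (hg.const_mul C) fun t ht => ?_
    rw [mul_comm C]
    exact mul_le_mul_of_nonneg_left (hh t ht) (hg0 t)
  · rw [integral_undef hgh]
    exact mul_nonneg hC (integral_nonneg hab fun t _ => hg0 t)

end IntervalIntegral

theorem prod_map_L2NormIoi_nonneg (gs : List (ℝ → ℝ)) : 0 ≤ (gs.map L2NormIoi).prod :=
  List.prod_nonneg fun _ hx => by
    obtain ⟨g, -, rfl⟩ := List.mem_map.1 hx
    exact Real.sqrt_nonneg _

theorem Ups_le {T : ℝ} (hT : 0 ≤ T) (gs : List (ℝ → ℝ))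
    (hnonneg : ∀ g ∈ gs, ∀ t : ℝ, 0 ≤ g t)
    (hL2 : ∀ g ∈ gs, IntegrableOn (fun t => (g t) ^ 2) (Set.Ioi (0:ℝ))) :
    Ups T gs ≤ T ^ ((gs.length : ℝ) / 2) * (gs.map L2NormIoi).prod := by
  induction gs generalizing T with
  | nil => simp [Ups]
  | cons g l ih =>
    simp only [List.forall_mem_cons] at hnonneg hL2
    set P := (l.map L2NormIoi).prod
    have hP : 0 ≤ P := prod_map_L2NormIoi_nonneg l
    have hinner : ∀ t ∈ Set.Icc 0 T, Ups t l ≤ T ^ ((l.length : ℝ) / 2) * P := fun t ht =>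
      (ih ht.1 hnonneg.2 hL2.2).trans <|
        mul_le_mul_of_nonneg_right (Real.rpow_le_rpow ht.1 ht.2 (by positivity)) hP
    calc Ups T (g :: l) = ∫ t in (0:ℝ)..T, g t * Ups t l := rfl
      _ ≤ T ^ ((l.length : ℝ) / 2) * P * ∫ t in (0:ℝ)..T, g t :=
        integral_mul_le_mul_integral_of_le hT hnonneg.1
          (intervalIntegrable_of_integrableOn_sq_Ioi hT hnonneg.1 hL2.1) (by positivity) hinner
      _ ≤ T ^ ((l.length : ℝ) / 2) * P * (√T * L2NormIoi g) := by
        gcongr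
        exact integral_le_sqrt_mul_L2NormIoi hT hnonneg.1 hL2.1
      _ = T ^ (((g :: l).length : ℝ) / 2) * ((g :: l).map L2NormIoi).prod := by
        rw [List.length_cons, List.map_cons, List.prod_cons, Nat.cast_succ, add_div,
          Real.rpow_add' hT (by positivity), Real.sqrt_eq_rpow]
        ring

theorem stmt2_general (T : ℝ) (hT : 0 < T) (gs : List (ℝ → ℝ))
    (hnonneg : ∀ g ∈ gs, ∀ t : ℝ, 0 ≤ g t)
    (hL2 : ∀ g ∈ gs, IntegrableOn (fun t => (g t) ^ 2) (Set.Ioi (0:ℝ))) :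
    Ups T gs ≤ T ^ ((gs.length : ℝ) / 2) * (gs.map L2NormIoi).prod :=
  Ups_le hT.le gs hnonneg hL2

theorem stmt2 (T : ℝ) (hT : 0 < T) (gs : List (ℝ → ℝ))
    (hnonneg : ∀ g ∈ gs, ∀ t : ℝ, 0 ≤ g t)
    (hL2 : ∀ g ∈ gs, IntegrableOn (fun t => (g t) ^ 2) (Set.Ioi (0:ℝ)))
    (hmeas : ∀ g ∈ gs, Measurable g) :
    Ups T gs ≤ T ^ ((gs.length : ℝ) / 2) * (gs.map L2NormIoi).prod :=
  stmt2_general T hT gs hnonneg hL2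
end

section
/- Let f, g₁,…,g_m : [0,∞) → ℝ be nonnegative square-integrable functions and β₀,…,β_m ∈ ℕ. Then the time-ordered integral Υ_T with integrand consisting of β₀ copies of f, then g₁, then β₁ copies of f, then g₂, …, then g_m, then β_m copies of f, is bounded by (T^{(Σβᵢ)/2} / ∏ᵢ βᵢ!) ‖f‖_{L²}^{Σβᵢ} · Υ_T[g₁,…,g_m]. -/
/-!
Write `F t = ∫₀ᵗ f`. A block of `b` copies of `f` integrates to `Υ_t[f,…,f] = F t ^ b / b!`
(the fundamental theorem of calculus for the absolutely continuous `F ^ (b + 1)`), and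
`F t ≤ √t ‖f‖_{L²}` by Cauchy–Schwarz. Since all integrands are nonnegative, `t ↦ Υ_t[L]` is
monotone, so `Υ_t[L₁ ++ L₂] ≤ Υ_t[L₁] Υ_t[L₂]`; splitting off the blocks of `f` one at a time
and bounding each by `(√T ‖f‖_{L²}) ^ b / b!` gives the estimate.
-/

open MeasureTheory intervalIntegral

/-- `interleave f (β₀ :: β₁ :: ⋯ :: β_m :: []) [g₁,…,g_m]` is the list consisting of
`β₀` copies of `f`, then `g₁`, then `β₁` copies of `f`, then `g₂`, …, then `g_m`,
then `β_m` copies of `f`. -/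
def interleave (f : ℝ → ℝ) : List ℕ → List (ℝ → ℝ) → List (ℝ → ℝ)
  | [], _ => []
  | b :: _, [] => List.replicate b f
  | b :: bs, g :: gs => List.replicate b f ++ g :: interleave f bs gs

open Set Filter

theorem IntervalIntegrable.mul_monotoneOn {g u : ℝ → ℝ} {a b : ℝ} (hab : a ≤ b)
    (hg : IntervalIntegrable g volume a b) (hu : MonotoneOn u (Icc a b)) :
    IntervalIntegrable (fun x => g x * u x) volume a b := by
  have hu' : IntervalIntegrable u volume a b :=
    MonotoneOn.intervalIntegrable (by rwa [uIcc_of_le hab])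
  rw [intervalIntegrable_iff_integrableOn_Ioc_of_le hab] at hg hu' ⊢
  refine hg.mul_bdd hu'.aestronglyMeasurable (c := max |u a| |u b|) ?_
  refine (ae_restrict_iff' measurableSet_Ioc).2 (Eventually.of_forall fun x hx => ?_)
  have hx' : x ∈ Icc a b := Ioc_subset_Icc_self hx
  exact abs_le_max_abs_abs (hu (left_mem_Icc.2 hab) hx' hx'.1)
    (hu hx' (right_mem_Icc.2 hab) hx'.2)

theorem AbsolutelyContinuousOnInterval.fun_pow {f : ℝ → ℝ} {a b : ℝ}
    (hf : AbsolutelyContinuousOnInterval f a b) (n : ℕ) :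
    AbsolutelyContinuousOnInterval (fun x => f x ^ n) a b := by
  induction n with
  | zero =>
    simpa only [_root_.pow_zero] using
      (LipschitzWith.const (1 : ℝ)).lipschitzOnWith.absolutelyContinuousOnInterval
  | succ n ih => simpa only [_root_.pow_succ] using ih.fun_mul hf

theorem integral_mul_pow_integral {f : ℝ → ℝ} {a b : ℝ} (hf : IntervalIntegrable f volume a b)
    (n : ℕ) :
    ∫ s in a..b, f s * (∫ u in a..s, f u) ^ n = (∫ u in a..b, f u) ^ (n + 1) / (n + 1) := by
  set F : ℝ → ℝ := fun x => ∫ u in a..x, f u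
  have hF : AbsolutelyContinuousOnInterval F a b :=
    hf.absolutelyContinuousOnInterval_intervalIntegral left_mem_uIcc
  have hderiv : ∀ᵐ x, x ∈ uIoc a b →
      deriv (fun x => F x ^ (n + 1)) x = (n + 1) * (f x * F x ^ n) := by
    filter_upwards [hf.ae_hasDerivAt_integral] with x hx hxab
    have := ((hx (uIoc_subset_uIcc hxab) a left_mem_uIcc).fun_pow (n + 1)).deriv
    rw [this]; push_cast; ring
  have hFTC := (hF.fun_pow (n + 1)).integral_deriv_eq_sub
  rw [intervalIntegral.integral_congr_ae hderiv, intervalIntegral.integral_const_mul] at hFTC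
  have hFa : F a = 0 := intervalIntegral.integral_same
  rw [hFa, zero_pow n.succ_ne_zero, sub_zero] at hFTC
  rw [eq_div_iff (by positivity), ← hFTC, mul_comm]

theorem ups_nonneg {L : List (ℝ → ℝ)} (hnn : ∀ h ∈ L, 0 ≤ h) {t : ℝ} (ht : 0 ≤ t) :
    0 ≤ Ups t L := by
  induction L generalizing t with
  | nil => simp [Ups]
  | cons g L ih =>
    rw [List.forall_mem_cons] at hnn
    exact intervalIntegral.integral_nonneg ht fun s hs => mul_nonneg (hnn.1 s) (ih hnn.2 hs.1)

theorem ups_monotoneOn {L : List (ℝ → ℝ)} (hnn : ∀ h ∈ L, 0 ≤ h)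
    (hint : ∀ h ∈ L, ∀ t ≥ 0, IntervalIntegrable h volume 0 t) :
    MonotoneOn (fun t => Ups t L) (Ici 0) := by
  induction L with
  | nil => intro s _ t _ _; simp [Ups]
  | cons g L ih =>
    simp only [List.forall_mem_cons] at hnn hint
    intro s hs t ht hst
    refine intervalIntegral.integral_mono_interval le_rfl hs hst ?_
      ((hint.1 t ht).mul_monotoneOn ht ((ih hnn.2 hint.2).mono Icc_subset_Ici_self))
    refine (ae_restrict_iff' measurableSet_Ioc).2 (Eventually.of_forall fun x hx => ?_)
    exact mul_nonneg (hnn.1 x) (ups_nonneg hnn.2 hx.1.le)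

theorem intervalIntegrable_mul_ups {g : ℝ → ℝ} {L : List (ℝ → ℝ)} (hnn : ∀ h ∈ L, 0 ≤ h)
    (hint : ∀ h ∈ L, ∀ t ≥ 0, IntervalIntegrable h volume 0 t) {t : ℝ} (ht : 0 ≤ t)
    (hg : IntervalIntegrable g volume 0 t) :
    IntervalIntegrable (fun s => g s * Ups s L) volume 0 t :=
  hg.mul_monotoneOn ht ((ups_monotoneOn hnn hint).mono Icc_subset_Ici_self)

theorem ups_cons_le_mul_ups_cons {g : ℝ → ℝ} {L₁ L₂ : List (ℝ → ℝ)} {c t : ℝ} (ht : 0 ≤ t)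
    (hg : 0 ≤ g) (hgt : IntervalIntegrable g volume 0 t)
    (hnn₁ : ∀ h ∈ L₁, 0 ≤ h) (hint₁ : ∀ h ∈ L₁, ∀ t ≥ 0, IntervalIntegrable h volume 0 t)
    (hnn₂ : ∀ h ∈ L₂, 0 ≤ h) (hint₂ : ∀ h ∈ L₂, ∀ t ≥ 0, IntervalIntegrable h volume 0 t)
    (hle : ∀ s ∈ Icc 0 t, Ups s L₁ ≤ c * Ups s L₂) :
    Ups t (g :: L₁) ≤ c * Ups t (g :: L₂) := by
  rw [Ups, Ups, ← intervalIntegral.integral_const_mul]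
  refine intervalIntegral.integral_mono_on ht (intervalIntegrable_mul_ups hnn₁ hint₁ ht hgt)
    ((intervalIntegrable_mul_ups hnn₂ hint₂ ht hgt).const_mul c) fun s hs => ?_
  calc g s * Ups s L₁ ≤ g s * (c * Ups s L₂) := mul_le_mul_of_nonneg_left (hle s hs) (hg s)
    _ = c * (g s * Ups s L₂) := mul_left_comm _ _ _

theorem ups_append_le {L₁ L₂ : List (ℝ → ℝ)}
    (hnn₁ : ∀ h ∈ L₁, 0 ≤ h) (hint₁ : ∀ h ∈ L₁, ∀ t ≥ 0, IntervalIntegrable h volume 0 t)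
    (hnn₂ : ∀ h ∈ L₂, 0 ≤ h) (hint₂ : ∀ h ∈ L₂, ∀ t ≥ 0, IntervalIntegrable h volume 0 t)
    {t : ℝ} (ht : 0 ≤ t) :
    Ups t (L₁ ++ L₂) ≤ Ups t L₁ * Ups t L₂ := by
  induction L₁ generalizing t with
  | nil => simp [Ups]
  | cons g L₁ ih =>
    simp only [List.forall_mem_cons] at hnn₁ hint₁
    rw [mul_comm]
    refine ups_cons_le_mul_ups_cons ht hnn₁.1 (hint₁.1 t ht)
      (List.forall_mem_append.2 ⟨hnn₁.2, hnn₂⟩) (List.forall_mem_append.2 ⟨hint₁.2, hint₂⟩)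
      hnn₁.2 hint₁.2 fun s hs => ?_
    calc Ups s (L₁ ++ L₂) ≤ Ups s L₁ * Ups s L₂ := ih hnn₁.2 hint₁.2 hs.1
      _ ≤ Ups s L₁ * Ups t L₂ := mul_le_mul_of_nonneg_left
          (ups_monotoneOn hnn₂ hint₂ hs.1 ht hs.2) (ups_nonneg hnn₁.2 hs.1)
      _ = Ups t L₂ * Ups s L₁ := mul_comm _ _

theorem ups_replicate {f : ℝ → ℝ} (hf : ∀ t ≥ 0, IntervalIntegrable f volume 0 t) (n : ℕ)
    {t : ℝ} (ht : 0 ≤ t) :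
    Ups t (List.replicate n f) = (∫ s in 0..t, f s) ^ n / n.factorial := by
  induction n generalizing t with
  | zero => simp [Ups]
  | succ n ih =>
    calc Ups t (List.replicate (n + 1) f)
        = ∫ s in 0..t, (n.factorial : ℝ)⁻¹ * (f s * (∫ u in 0..s, f u) ^ n) := by
          rw [List.replicate_succ, Ups]
          refine intervalIntegral.integral_congr fun s hs => ?_
          rw [uIcc_of_le ht] at hs
          rw [ih hs.1]; ring
      _ = (∫ s in 0..t, f s) ^ (n + 1) / (n + 1).factorial := by
          rw [intervalIntegral.integral_const_mul, integral_mul_pow_integral (hf t ht),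
            Nat.factorial_succ]
          push_cast; field_simp

theorem forall_mem_interleave {p : (ℝ → ℝ) → Prop} {f : ℝ → ℝ} (hf : p f) :
    ∀ {βs : List ℕ} {gs : List (ℝ → ℝ)}, (∀ g ∈ gs, p g) → ∀ h ∈ interleave f βs gs, p h
  | [], _, _ => by simp [interleave]
  | _ :: _, [], _ => fun _ hh => List.eq_of_mem_replicate hh ▸ hf
  | b :: βs, g :: gs, hgs => by
    simp only [List.forall_mem_cons] at hgs
    simp only [interleave, List.forall_mem_append, List.forall_mem_cons]
    exact ⟨fun h hh => List.eq_of_mem_replicate hh ▸ hf, hgs.1, forall_mem_interleave hf hgs.2⟩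

theorem ups_interleave_le {f : ℝ → ℝ} {gs : List (ℝ → ℝ)} {βs : List ℕ} {K : ℕ → ℝ} {T : ℝ}
    (hlen : βs.length = gs.length + 1)
    (hf : 0 ≤ f) (hfint : ∀ t ≥ 0, IntervalIntegrable f volume 0 t)
    (hnn : ∀ g ∈ gs, 0 ≤ g) (hint : ∀ g ∈ gs, ∀ t ≥ 0, IntervalIntegrable g volume 0 t)
    (hK : ∀ b, ∀ t ∈ Icc 0 T, Ups t (List.replicate b f) ≤ K b) :
    ∀ t ∈ Icc 0 T, Ups t (interleave f βs gs) ≤ (βs.map K).prod * Ups t gs := by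
  induction gs generalizing βs with
  | nil =>
    obtain ⟨b, rfl⟩ : ∃ b, βs = [b] := List.length_eq_one_iff.1 hlen
    simpa [interleave, Ups] using hK b
  | cons g gs ih =>
    obtain ⟨b, βs, rfl⟩ := List.exists_cons_of_length_eq_add_one hlen
    simp only [List.forall_mem_cons] at hnn hint
    have hrep_nn : ∀ h ∈ List.replicate b f, 0 ≤ h := fun h hh => List.eq_of_mem_replicate hh ▸ hf
    have hrep_int : ∀ h ∈ List.replicate b f, ∀ t ≥ 0, IntervalIntegrable h volume 0 t :=
      fun h hh => List.eq_of_mem_replicate hh ▸ hfint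
    have hinter_nn := forall_mem_interleave (βs := βs) hf hnn.2
    have hinter_int := forall_mem_interleave (βs := βs) hfint hint.2
    intro t ht
    calc Ups t (interleave f (b :: βs) (g :: gs))
        = Ups t (List.replicate b f ++ g :: interleave f βs gs) := rfl
      _ ≤ Ups t (List.replicate b f) * Ups t (g :: interleave f βs gs) :=
          ups_append_le hrep_nn hrep_int (List.forall_mem_cons.2 ⟨hnn.1, hinter_nn⟩)
            (List.forall_mem_cons.2 ⟨hint.1, hinter_int⟩) ht.1
      _ ≤ K b * ((βs.map K).prod * Ups t (g :: gs)) := by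
          refine mul_le_mul (hK b t ht) (ups_cons_le_mul_ups_cons ht.1 hnn.1 (hint.1 t ht.1)
            hinter_nn hinter_int hnn.2 hint.2 fun s hs => ih (by simpa using hlen) hnn.2 hint.2 s
              ⟨hs.1, hs.2.trans ht.2⟩) ?_ ((ups_nonneg hrep_nn ht.1).trans (hK b t ht))
          exact ups_nonneg (List.forall_mem_cons.2 ⟨hnn.1, hinter_nn⟩) ht.1
      _ = ((b :: βs).map K).prod * Ups t (g :: gs) := by
          rw [List.map_cons, List.prod_cons, mul_assoc]

theorem intervalIntegrable_of_integrableOn_sq {f : ℝ → ℝ} (hm : AEStronglyMeasurable f volume)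
    (hf2 : IntegrableOn (fun t => f t ^ 2) (Ioi 0)) {t : ℝ} (ht : 0 ≤ t) :
    IntervalIntegrable f volume 0 t := by
  rw [intervalIntegrable_iff_integrableOn_Ioc_of_le ht]
  exact ((memLp_two_iff_integrable_sq hm.restrict).2
    (hf2.mono_set Ioc_subset_Ioi_self)).integrable one_le_two

theorem intervalIntegral_le_sqrt_mul_L2NormIoi {f : ℝ → ℝ} (hf : 0 ≤ f)
    (hm : AEStronglyMeasurable f volume) (hf2 : IntegrableOn (fun t => f t ^ 2) (Ioi 0))
    {t : ℝ} (ht : 0 ≤ t) :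
    ∫ s in 0..t, f s ≤ √t * L2NormIoi f := by
  have hmem : MemLp f (ENNReal.ofReal 2) (volume.restrict (Ioc 0 t)) := by
    rw [ENNReal.ofReal_ofNat]
    exact (memLp_two_iff_integrable_sq hm.restrict).2 (hf2.mono_set Ioc_subset_Ioi_self)
  have hCS := integral_mul_le_Lp_mul_Lq_of_nonneg Real.HolderConjugate.two_two
    (ae_of_all _ hf) (ae_of_all _ fun _ => zero_le_one) hmem (memLp_const 1)
  simp only [mul_one, Real.rpow_two, setIntegral_const, smul_eq_mul] at hCS
  rw [intervalIntegral.integral_of_le ht, L2NormIoi, Real.sqrt_eq_rpow, Real.sqrt_eq_rpow,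
    mul_comm]
  calc ∫ s in Ioc 0 t, f s ≤ (∫ s in Ioc 0 t, f s ^ 2) ^ (1 / 2 : ℝ) * t ^ (1 / 2 : ℝ) := by
        simpa [ht] using hCS
    _ ≤ (∫ s in Ioi 0, f s ^ 2) ^ (1 / 2 : ℝ) * t ^ (1 / 2 : ℝ) := by
        gcongr
        · exact ae_of_all _ fun s => sq_nonneg (f s)
        · exact Ioc_subset_Ioi_self

theorem prod_map_pow_div_factorial (x : ℝ) (βs : List ℕ) :
    (βs.map fun b => x ^ b / b.factorial).prod = x ^ βs.sum / (βs.map Nat.factorial).prod := by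
  induction βs with
  | nil => simp
  | cons b βs ih =>
    simp only [List.map_cons, List.prod_cons, List.sum_cons, ih, pow_add, Nat.cast_mul]
    field_simp

theorem stmt3 (T : ℝ) (hT : 0 < T) (f : ℝ → ℝ) (gs : List (ℝ → ℝ)) (βs : List ℕ)
    (hlen : βs.length = gs.length + 1)
    (hfnonneg : ∀ t : ℝ, 0 ≤ f t)
    (hfL2 : IntegrableOn (fun t => (f t) ^ 2) (Set.Ioi (0:ℝ)))
    (hfmeas : Measurable f)
    (hnonneg : ∀ g ∈ gs, ∀ t : ℝ, 0 ≤ g t)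
    (hL2 : ∀ g ∈ gs, IntegrableOn (fun t => (g t) ^ 2) (Set.Ioi (0:ℝ)))
    (hmeas : ∀ g ∈ gs, Measurable g) :
    Ups T (interleave f βs gs) ≤
      (T ^ ((βs.sum : ℝ) / 2) / (βs.map Nat.factorial).prod) *
        (L2NormIoi f) ^ βs.sum * Ups T gs := by
  have hfint : ∀ t ≥ 0, IntervalIntegrable f volume 0 t := fun _ =>
    intervalIntegrable_of_integrableOn_sq hfmeas.aestronglyMeasurable hfL2
  have hgint : ∀ g ∈ gs, ∀ t ≥ 0, IntervalIntegrable g volume 0 t := fun g hg _ =>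
    intervalIntegrable_of_integrableOn_sq (hmeas g hg).aestronglyMeasurable (hL2 g hg)
  have hblock : ∀ b, ∀ t ∈ Icc 0 T,
      Ups t (List.replicate b f) ≤ (√T * L2NormIoi f) ^ b / b.factorial := by
    intro b t ht
    rw [ups_replicate hfint b ht.1]
    gcongr
    · exact intervalIntegral.integral_nonneg ht.1 fun s _ => hfnonneg s
    · calc ∫ s in 0..t, f s ≤ √t * L2NormIoi f :=
            intervalIntegral_le_sqrt_mul_L2NormIoi hfnonneg hfmeas.aestronglyMeasurable hfL2 ht.1
        _ ≤ √T * L2NormIoi f := by gcongr; exacts [Real.sqrt_nonneg _, ht.2]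
  calc Ups T (interleave f βs gs)
      ≤ (βs.map fun b => (√T * L2NormIoi f) ^ b / b.factorial).prod * Ups T gs :=
        ups_interleave_le hlen hfnonneg hfint hnonneg hgint hblock T ⟨hT.le, le_rfl⟩
    _ = _ := by
        rw [prod_map_pow_div_factorial, mul_pow, Real.sqrt_eq_rpow, ← Real.rpow_natCast,
          ← Real.rpow_mul hT.le]
        ring_nf
end

section
/- Let A, W be fixed N×N complex matrices with W unitary, and define J_F : U(N) → ℝ by J_F(U) = ‖(U − W)A‖², where ‖·‖ is the Frobenius norm. Then U ∈ U(N) is a critical point of J_F (with respect to the bi-invariant Riemannian metric induced by the real Hilbert–Schmidt inner product) if and only if U A A† W† U = W A A†, equivalently the gradient UAA†W†U − WAA† vanishes. -/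
open Matrix

/-! For unitary `V` the quadratic terms of `J_F` are constant:
`J_F(V) = 2 Re tr(A†A) - 2 Re tr(V A A† W†)`. Along `t ↦ U exp(tS)`, `S` skew-Hermitian, the
derivative at `0` is therefore `-2 Re tr(S M)` with `M = A A† W† U`. These vanish for every
skew-Hermitian `S` exactly when `M` is Hermitian (test with `S = M - M†`, which gives
`Re tr((M - M†)(M - M†)†) = 0`), and `M† = M` becomes `U A A† W† U = W A A†` after multiplying
on the left by `U`. -/

/-- The landscape `J_F(U) = ‖(U − W)A‖²` (squared Frobenius norm). -/
noncomputable def JF {N : ℕ} (A W : Matrix (Fin N) (Fin N) ℂ)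
    (U : Matrix (Fin N) (Fin N) ℂ) : ℝ :=
  (Matrix.trace (((U - W) * A)ᴴ * ((U - W) * A))).re

namespace Matrix

variable {n : Type*} [Fintype n]

theorem re_trace_conjTranspose (X : Matrix n n ℂ) : Xᴴ.trace.re = X.trace.re := by
  rw [trace_conjTranspose]; exact Complex.conj_re _

theorem eq_zero_of_re_trace_mul_conjTranspose_self_eq_zero {K : Matrix n n ℂ}
    (h : (K * Kᴴ).trace.re = 0) : K = 0 := by
  open scoped ComplexOrder in
  have hnonneg : 0 ≤ (K * Kᴴ).trace := (posSemidef_self_mul_conjTranspose K).trace_nonneg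
  exact trace_mul_conjTranspose_self_eq_zero_iff.mp
    (Complex.ext h (Complex.nonneg_iff.mp hnonneg).2.symm)

theorem re_trace_mul_sub_conjTranspose {S : Matrix n n ℂ} (hS : Sᴴ = -S) (M : Matrix n n ℂ) :
    (S * (M - Mᴴ)).trace.re = 2 * (S * M).trace.re := by
  have h : (S * Mᴴ).trace.re = -(S * M).trace.re := by
    rw [← re_trace_conjTranspose, conjTranspose_mul, conjTranspose_conjTranspose, hS, mul_neg,
      trace_neg, trace_mul_comm, Complex.neg_re]
  rw [mul_sub, trace_sub, Complex.sub_re, h]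
  ring

theorem forall_re_trace_mul_eq_zero_iff_isHermitian (M : Matrix n n ℂ) :
    (∀ S : Matrix n n ℂ, Sᴴ = -S → (S * M).trace.re = 0) ↔ M.IsHermitian := by
  constructor
  · intro h
    set K := M - Mᴴ with hK
    have hKskew : Kᴴ = -K := by rw [conjTranspose_sub, conjTranspose_conjTranspose, neg_sub]
    have hKK : (K * Kᴴ).trace.re = 0 := by
      rw [hKskew, mul_neg, trace_neg, Complex.neg_re, hK, re_trace_mul_sub_conjTranspose hKskew,
        h K hKskew]
      ring
    exact (sub_eq_zero.mp (eq_zero_of_re_trace_mul_conjTranspose_self_eq_zero hKK)).symm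
  · intro hM S hS
    have h := re_trace_mul_sub_conjTranspose hS M
    rw [hM.eq, sub_self, mul_zero, trace_zero, Complex.zero_re] at h
    linarith

variable [DecidableEq n]

theorem exp_mem_unitaryGroup_of_conjTranspose_eq_neg {S : Matrix n n ℂ} (hS : Sᴴ = -S) :
    NormedSpace.exp S ∈ unitaryGroup n ℂ := by
  rw [mem_unitaryGroup_iff', star_eq_conjTranspose, ← exp_conjTranspose, hS,
    ← Matrix.exp_add_of_commute _ _ (Commute.refl S).neg_left, neg_add_cancel,
    NormedSpace.exp_zero]

theorem hasDerivAt_re_trace_exp_smul_mul (S M : Matrix n n ℂ) :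
    HasDerivAt (fun t : ℝ => (NormedSpace.exp (t • S) * M).trace.re) (S * M).trace.re 0 := by
  -- `exp` only depends on the topology, so any normed algebra structure on matrices will do.
  let := Matrix.linftyOpNormedRing (n := n) (α := ℂ)
  let := Matrix.linftyOpNormedAlgebra (n := n) (R := ℝ) (α := ℂ)
  have hexp := hasDerivAt_exp_smul_const' (𝕂 := ℝ) S 0
  rw [zero_smul, NormedSpace.exp_zero, mul_one] at hexp
  let reTrace : Matrix n n ℂ →L[ℝ] ℝ :=
    Complex.reCLM.comp ((traceLinearMap n ℂ ℂ).restrictScalars ℝ).toContinuousLinearMap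
  exact reTrace.hasFDerivAt.comp_hasDerivAt 0 (hexp.mul_const M)

end Matrix

theorem JF_eq_of_mem_unitaryGroup {N : ℕ} {A W V : Matrix (Fin N) (Fin N) ℂ}
    (hW : W ∈ unitaryGroup (Fin N) ℂ) (hV : V ∈ unitaryGroup (Fin N) ℂ) :
    JF A W V = 2 * (Aᴴ * A).trace.re - 2 * (V * (A * Aᴴ * Wᴴ)).trace.re := by
  have hexpand : ((V - W) * A)ᴴ * ((V - W) * A)
      = Aᴴ * (Vᴴ * V) * A + Aᴴ * (Wᴴ * W) * A - (Aᴴ * Wᴴ * V * A)ᴴ - Aᴴ * Wᴴ * V * A := by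
    simp only [conjTranspose_mul, conjTranspose_sub, conjTranspose_conjTranspose]
    noncomm_ring
  have hcycle : (Aᴴ * Wᴴ * V * A).trace = (V * (A * Aᴴ * Wᴴ)).trace := by
    rw [trace_mul_comm, ← mul_assoc, ← mul_assoc, trace_mul_comm, ← mul_assoc]
  rw [mem_unitaryGroup_iff', star_eq_conjTranspose] at hV hW
  rw [JF, hexpand, hV, hW, trace_sub, trace_sub, Complex.sub_re, Complex.sub_re,
    re_trace_conjTranspose, hcycle, mul_one, trace_add, Complex.add_re]
  ring

theorem hasDerivAt_JF_mul_exp_smul {N : ℕ} {A W U S : Matrix (Fin N) (Fin N) ℂ}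
    (hW : W ∈ unitaryGroup (Fin N) ℂ) (hU : U ∈ unitaryGroup (Fin N) ℂ) (hS : Sᴴ = -S) :
    HasDerivAt (fun t : ℝ => JF A W (U * NormedSpace.exp (t • S)))
      (-2 * (S * (A * Aᴴ * Wᴴ * U)).trace.re) 0 := by
  have hskew (t : ℝ) : (t • S)ᴴ = -(t • S) := by
    rw [conjTranspose_smul, hS, star_trivial, smul_neg]
  have hJF : (fun t : ℝ => JF A W (U * NormedSpace.exp (t • S))) = fun t =>
      2 * (Aᴴ * A).trace.re - 2 * (NormedSpace.exp (t • S) * (A * Aᴴ * Wᴴ * U)).trace.re := by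
    funext t
    rw [JF_eq_of_mem_unitaryGroup hW
      (mul_mem hU (exp_mem_unitaryGroup_of_conjTranspose_eq_neg (hskew t))), mul_assoc U,
      trace_mul_comm U, mul_assoc]
  rw [hJF]
  have h := (hasDerivAt_const (0 : ℝ) (2 * (Aᴴ * A).trace.re)).sub
    ((hasDerivAt_re_trace_exp_smul_mul S (A * Aᴴ * Wᴴ * U)).const_mul 2)
  rwa [zero_sub, ← neg_mul] at h

theorem stmt6 (N : ℕ) (A W : Matrix (Fin N) (Fin N) ℂ)
    (hW : W ∈ Matrix.unitaryGroup (Fin N) ℂ)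
    (U : Matrix (Fin N) (Fin N) ℂ) (hU : U ∈ Matrix.unitaryGroup (Fin N) ℂ) :
    (∀ S : Matrix (Fin N) (Fin N) ℂ, Sᴴ = -S →
        deriv (fun t : ℝ => JF A W (U * NormedSpace.exp (t • S))) 0 = 0) ↔
      U * A * Aᴴ * Wᴴ * U = W * A * Aᴴ := by
  set M := A * Aᴴ * Wᴴ * U with hM
  have hUM : U * Mᴴ = W * A * Aᴴ := by
    have hUU : U * Uᴴ = 1 := mem_unitaryGroup_iff.mp hU
    simp only [hM, conjTranspose_mul, conjTranspose_conjTranspose, ← mul_assoc, hUU, one_mul]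
  calc (∀ S : Matrix (Fin N) (Fin N) ℂ, Sᴴ = -S →
        deriv (fun t : ℝ => JF A W (U * NormedSpace.exp (t • S))) 0 = 0)
      ↔ ∀ S : Matrix (Fin N) (Fin N) ℂ, Sᴴ = -S → (S * M).trace.re = 0 :=
        forall₂_congr fun S hS => by
          rw [(hasDerivAt_JF_mul_exp_smul hW hU hS).deriv, ← hM]
          simp
    _ ↔ Mᴴ = M := forall_re_trace_mul_eq_zero_iff_isHermitian M
    _ ↔ U * M = U * Mᴴ := eq_comm.trans (Unitary.mul_right_inj ⟨U, hU⟩).symm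
    _ ↔ U * A * Aᴴ * Wᴴ * U = W * A * Aᴴ := by rw [hUM, hM]; simp only [mul_assoc]
end

section
/- Let A ∈ ℂ^{N×N}, W ∈ U(N), and define B : u(N) → u(N) by B(Ω) = AΩA†. Then for every U ∈ U(N), ‖(Ad(U) − Ad(W)) ∘ B‖²_{HS} = 2‖A‖⁴ − 2|Tr(AA†W†U)|², where ‖·‖_{HS} is the Hilbert–Schmidt norm of operators on u(N) and ‖A‖ the Frobenius norm of A. -/
/-!
Since `Tr(X†Y)` is real for skew-Hermitian `X, Y`, an orthonormal basis `(Ωⱼ)` of `u(N)` (real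
dimension `N²`) is also an orthonormal basis of `ℂ^{N×N}` over `ℂ` for the Frobenius inner product.
Parseval's identity for it is the completeness relation `∑ⱼ (Ωⱼ)ₐᵦ (Ωⱼ)꜀ₔ = -δₐₔ δᵦ꜀`, that is
`∑ⱼ Ωⱼ P Ωⱼ = -Tr(P) • 1`, hence `∑ⱼ Tr(Ωⱼ P Ωⱼ Q) = -Tr(P) Tr(Q)`.
By unitarity and cyclicity of the trace, `‖U B U† - W B W†‖² = 2‖B‖² - 2 Re Tr(B† (U†W) B (W†U))`,
and with `B = A Ωⱼ A†` the completeness relation sums these to `2 Tr(A†A)² - 2 |Tr(A A† W† U)|²`.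
-/

open Matrix Finset

open scoped InnerProductSpace ComplexConjugate ComplexOrder

namespace Matrix

def flatten {m n : Type*} (X : Matrix m n ℂ) : EuclideanSpace ℂ (m × n) :=
  WithLp.toLp 2 fun p => X p.1 p.2

@[simp]
theorem flatten_apply {m n : Type*} (X : Matrix m n ℂ) (p : m × n) :
    X.flatten p = X p.1 p.2 := rfl

variable {m n ι : Type*} [Fintype m] [Fintype n] [Fintype ι] [DecidableEq ι]

theorem inner_flatten (X Y : Matrix m n ℂ) :
    ⟪X.flatten, Y.flatten⟫_ℂ = trace (Xᴴ * Y) := by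
  simp [PiLp.inner_apply, trace, mul_apply, Fintype.sum_prod_type, mul_comm]
  exact Finset.sum_comm

theorem sum_apply_mul_star_apply [DecidableEq m] [DecidableEq n] (Ω : ι → Matrix m n ℂ)
    (hcard : Fintype.card ι = Fintype.card m * Fintype.card n)
    (horth : ∀ i j, trace ((Ω i)ᴴ * Ω j) = if i = j then 1 else 0) (a c : m) (b d : n) :
    ∑ j, Ω j a b * star (Ω j c d) = if a = c ∧ b = d then 1 else 0 := by
  have hv : Orthonormal ℂ fun j => (Ω j).flatten :=
    orthonormal_iff_ite.mpr fun i j => by rw [inner_flatten, horth]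
  have hspan := hv.linearIndependent.span_eq_top_of_card_eq_finrank'
    (by rw [finrank_euclideanSpace, Fintype.card_prod, hcard])
  have := (OrthonormalBasis.mk hv hspan.ge).sum_inner_mul_inner
    (EuclideanSpace.single (a, b) 1) (EuclideanSpace.single (c, d) 1)
  simpa [EuclideanSpace.inner_single_left, EuclideanSpace.inner_single_right, apply_ite,
    Prod.ext_iff, eq_comm, mul_comm] using this

theorem ofReal_re_trace_conjTranspose_mul {X Y : Matrix n n ℂ} (hX : Xᴴ = -X) (hY : Yᴴ = -Y) :
    ((trace (Xᴴ * Y)).re : ℂ) = trace (Xᴴ * Y) := by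
  refine Complex.conj_eq_iff_re.mp ?_
  rw [← Complex.star_def, ← trace_conjTranspose, conjTranspose_mul, conjTranspose_conjTranspose,
    hX, hY, neg_mul, neg_mul, trace_neg, trace_neg, trace_mul_comm]

section Unitary

variable {R : Type*} [CommRing R] [StarRing R]

theorem trace_conj_mul_conj (V V' X Y : Matrix n n R) :
    trace (V * X * Vᴴ * (V' * Y * V'ᴴ)) = trace (X * (Vᴴ * V') * Y * (V'ᴴ * V)) := by
  rw [show V * X * Vᴴ * (V' * Y * V'ᴴ) = V * (X * (Vᴴ * V') * Y * V'ᴴ) by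
    simp only [Matrix.mul_assoc], trace_mul_comm]
  simp only [Matrix.mul_assoc]

theorem trace_conjTranspose_mul_self_conj_sub_conj [DecidableEq n] {U W : Matrix n n R}
    (hU : U ∈ unitaryGroup n R) (hW : W ∈ unitaryGroup n R) (B : Matrix n n R) :
    trace ((U * B * Uᴴ - W * B * Wᴴ)ᴴ * (U * B * Uᴴ - W * B * Wᴴ)) =
      2 * trace (Bᴴ * B) - trace (Bᴴ * (Uᴴ * W) * B * (Wᴴ * U)) -
        trace (Bᴴ * (Wᴴ * U) * B * (Uᴴ * W)) := by
  have hconj : ∀ V : Matrix n n R, (V * B * Vᴴ)ᴴ = V * Bᴴ * Vᴴ := fun V => by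
    simp only [conjTranspose_mul, conjTranspose_conjTranspose, Matrix.mul_assoc]
  rw [conjTranspose_sub, hconj, hconj, sub_mul, mul_sub, mul_sub, trace_sub, trace_sub, trace_sub,
    trace_conj_mul_conj, trace_conj_mul_conj, trace_conj_mul_conj, trace_conj_mul_conj]
  simp only [show Uᴴ * U = 1 from Unitary.star_mul_self_of_mem hU,
    show Wᴴ * W = 1 from Unitary.star_mul_self_of_mem hW, Matrix.mul_one]
  ring

end Unitary

variable [DecidableEq n] {Ω : ι → Matrix n n ℂ}

theorem sum_apply_mul_apply_of_skew (hcard : Fintype.card ι = Fintype.card n ^ 2)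
    (hskew : ∀ j, (Ω j)ᴴ = -(Ω j))
    (horth : ∀ i j, (trace ((Ω i)ᴴ * Ω j)).re = if i = j then 1 else 0) (a b c d : n) :
    ∑ j, Ω j a b * Ω j c d = -if a = d ∧ b = c then 1 else 0 := by
  have horth' : ∀ i j, trace ((Ω i)ᴴ * Ω j) = if i = j then 1 else 0 := fun i j => by
    rw [← ofReal_re_trace_conjTranspose_mul (hskew i) (hskew j), horth]
    split_ifs <;> simp
  have hstar : ∀ j, star (Ω j d c) = -Ω j c d := fun j => by
    rw [← conjTranspose_apply, hskew, neg_apply]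
  rw [← sum_apply_mul_star_apply Ω (by rw [hcard, sq]) horth' a d b c]
  simp [hstar]

theorem sum_mul_mul_eq_neg_trace_smul_one (hcard : Fintype.card ι = Fintype.card n ^ 2)
    (hskew : ∀ j, (Ω j)ᴴ = -(Ω j))
    (horth : ∀ i j, (trace ((Ω i)ᴴ * Ω j)).re = if i = j then 1 else 0) (P : Matrix n n ℂ) :
    ∑ j, Ω j * P * Ω j = -(trace P • 1) := by
  ext a d
  have hcompl := sum_apply_mul_apply_of_skew hcard hskew horth a
  simp only [sum_apply, mul_apply, Finset.sum_mul]
  calc ∑ k, ∑ c, ∑ b, Ω k a b * P b c * Ω k c d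
      = ∑ c, ∑ b, P b c * ∑ k, Ω k a b * Ω k c d := by
        simp only [Finset.mul_sum]
        rw [Finset.sum_comm]
        refine sum_congr rfl fun c _ => ?_
        rw [Finset.sum_comm]
        exact sum_congr rfl fun b _ => sum_congr rfl fun k _ => by ring
    _ = _ := by
        simp only [hcompl]
        by_cases had : a = d <;> simp [had, trace]

theorem sum_trace_mul_mul_mul_of_skew (hcard : Fintype.card ι = Fintype.card n ^ 2)
    (hskew : ∀ j, (Ω j)ᴴ = -(Ω j))
    (horth : ∀ i j, (trace ((Ω i)ᴴ * Ω j)).re = if i = j then 1 else 0) (P Q : Matrix n n ℂ) :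
    ∑ j, trace (Ω j * P * Ω j * Q) = -(trace P * trace Q) := by
  rw [← trace_sum, ← Finset.sum_mul, sum_mul_mul_eq_neg_trace_smul_one hcard hskew horth,
    neg_mul, trace_neg, smul_mul_assoc, one_mul, trace_smul, smul_eq_mul]

theorem sum_trace_conjTranspose_mul_mul_mul_of_skew
    (hcard : Fintype.card ι = Fintype.card n ^ 2) (hskew : ∀ j, (Ω j)ᴴ = -(Ω j))
    (horth : ∀ i j, (trace ((Ω i)ᴴ * Ω j)).re = if i = j then 1 else 0)
    (A M M' : Matrix n n ℂ) :
    ∑ j, trace ((A * Ω j * Aᴴ)ᴴ * M * (A * Ω j * Aᴴ) * M') =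
      trace (Aᴴ * M * A) * trace (Aᴴ * M' * A) := by
  have hcyc : ∀ j, trace ((A * Ω j * Aᴴ)ᴴ * M * (A * Ω j * Aᴴ) * M') =
      -trace (Ω j * (Aᴴ * M * A) * Ω j * (Aᴴ * M' * A)) := fun j => by
    rw [conjTranspose_mul, conjTranspose_mul, conjTranspose_conjTranspose, hskew, ← trace_neg,
      show A * (-Ω j * Aᴴ) * M * (A * Ω j * Aᴴ) * M' =
        A * -(Ω j * (Aᴴ * M * A) * Ω j * (Aᴴ * M')) by
          simp only [Matrix.mul_assoc, neg_mul, mul_neg],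
      trace_mul_comm]
    simp only [Matrix.mul_assoc, neg_mul]
  rw [sum_congr rfl fun j _ => hcyc j, sum_neg_distrib,
    sum_trace_mul_mul_mul_of_skew hcard hskew horth, neg_neg]

end Matrix

theorem stmt13 (N : ℕ) (A W U : Matrix (Fin N) (Fin N) ℂ)
    (hW : W ∈ Matrix.unitaryGroup (Fin N) ℂ)
    (hU : U ∈ Matrix.unitaryGroup (Fin N) ℂ)
    -- an orthonormal basis (Ωⱼ) of u(N) for ⟨X,Y⟩ = Re Tr(X†Y):
    -- N² orthonormal skew-Hermitian matrices
    (ι : Type) [Fintype ι] [DecidableEq ι] (hcard : Fintype.card ι = N ^ 2)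
    (Ω : ι → Matrix (Fin N) (Fin N) ℂ)
    (hskew : ∀ j, (Ω j)ᴴ = -(Ω j))
    (horth : ∀ i j, (Matrix.trace ((Ω i)ᴴ * Ω j)).re = if i = j then 1 else 0) :
    -- ‖(Ad(U) − Ad(W)) ∘ B‖²_HS = 2‖A‖⁴ − 2|Tr(AA†W†U)|², where B(Ω) = AΩA†
    (∑ j, (Matrix.trace
        ((U * (A * Ω j * Aᴴ) * Uᴴ - W * (A * Ω j * Aᴴ) * Wᴴ)ᴴ *
          (U * (A * Ω j * Aᴴ) * Uᴴ - W * (A * Ω j * Aᴴ) * Wᴴ))).re) =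
      2 * ((Matrix.trace (Aᴴ * A)).re) ^ 2 -
        2 * ‖Matrix.trace (A * Aᴴ * Wᴴ * U)‖ ^ 2 := by
  rw [← Fintype.card_fin N] at hcard
  have hsum := sum_trace_conjTranspose_mul_mul_mul_of_skew hcard hskew horth A
  have hsum_norm := hsum 1 1
  simp only [Matrix.mul_one] at hsum_norm
  set t := trace (A * Aᴴ * Wᴴ * U)
  have ht : trace (Aᴴ * (Wᴴ * U) * A) = t := by
    rw [trace_mul_comm]
    simp only [Matrix.mul_assoc, t]
  have ht' : trace (Aᴴ * (Uᴴ * W) * A) = conj t := by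
    rw [← Complex.star_def, ← trace_conjTranspose, trace_mul_comm]
    simp only [conjTranspose_mul, conjTranspose_conjTranspose, Matrix.mul_assoc]
    rw [← Matrix.mul_assoc, trace_mul_comm, Matrix.mul_assoc]
  have hreal : (trace (Aᴴ * A)).im = 0 :=
    (Complex.nonneg_iff.mp (posSemidef_conjTranspose_mul_self A).trace_nonneg).2.symm
  rw [← Complex.re_sum]
  simp only [trace_conjTranspose_mul_self_conj_sub_conj hU hW, sum_sub_distrib, ← mul_sum,
    hsum_norm, hsum, ht, ht']
  rw [Complex.conj_mul', Complex.mul_conj', ← Complex.ofReal_pow]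
  simp only [Complex.sub_re, Complex.mul_re, Complex.ofReal_re, Complex.re_ofNat,
    Complex.im_ofNat, hreal]
  ring
end

section
/- Define J_P : U(N) → ℝ by J_P(U) = ‖A‖⁴ − |Tr(AA†W†U)|² for fixed A ∈ ℂ^{N×N} and W ∈ U(N). Then the Riemannian gradient of J_P at U is grad J_P(U) = Tr(U†WAA†) · U AA† W† U − Tr(AA†W†U) · W AA†, and if Tr(U†WAA†) ≠ 0 then grad J_P(U) = 0 if and only if AA† Z = Z† AA†, where Z = (Tr(U†WAA†)/|Tr(U†WAA†)|) W†U. -/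
open Matrix

/-- The phase-invariant landscape `J_P(U) = ‖A‖⁴ − |Tr(AA†W†U)|²`. -/
noncomputable def JP {N : ℕ} (A W : Matrix (Fin N) (Fin N) ℂ)
    (U : Matrix (Fin N) (Fin N) ℂ) : ℝ :=
  ((Matrix.trace (Aᴴ * A)).re) ^ 2 - ‖Matrix.trace (A * Aᴴ * Wᴴ * U)‖ ^ 2

/-!
Write `B = AA†W†U`, `τ = Tr(U†WAA†) = conj (Tr B)` and `C = τ B`. Along `U e^{tS}` only
`|Tr(B e^{tS})|²` varies, and its derivative at `t = 0` is `2 Re (τ Tr(BS)) = 2 Re Tr(CS)`.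
Since `UU† = 1`, the claimed gradient factors as `G = U (C − C†)`, and for skew-Hermitian `S`
one has `Re Tr((C − C†)† S) = −2 Re Tr(CS)`. Hence `G = 0` iff `C` is Hermitian; as
`AA† Z = C / |τ|` and `AA†` is Hermitian, this says `AA† Z = (AA† Z)† = Z† AA†`.
-/

namespace Matrix

variable {n : Type*} [Fintype n]

section Exp

-- Any normed-algebra structure will do: it induces the product topology definitionally.
attribute [local instance] Matrix.linftyOpNormedRing Matrix.linftyOpNormedAlgebra

theorem hasDerivAt_trace_mul_exp_smul {𝕜 : Type*} [RCLike 𝕜] [DecidableEq n]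
    (B S : Matrix n n 𝕜) :
    HasDerivAt (fun t : ℝ => trace (B * NormedSpace.exp (t • S))) (trace (B * S)) 0 := by
  have hexp : HasDerivAt (fun t : ℝ => NormedSpace.exp (t • S)) S 0 := by
    have h := hasDerivAt_exp_smul_const (𝕂 := ℝ) S 0
    rw [zero_smul, NormedSpace.exp_zero, one_mul] at h
    exact h
  exact ((traceLinearMap n 𝕜 𝕜).restrictScalars ℝ).toContinuousLinearMap.hasFDerivAt
    |>.comp_hasDerivAt 0 (hexp.const_mul B)

end Exp

theorem trace_conjTranspose_mul_of_skew {α : Type*} [CommRing α] [StarRing α]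
    {S : Matrix n n α} (hS : Sᴴ = -S) (C : Matrix n n α) :
    trace (Cᴴ * S) = -star (trace (C * S)) := by
  rw [← trace_conjTranspose, conjTranspose_mul, hS, neg_mul, trace_neg, neg_neg,
    trace_mul_comm]

theorem re_trace_conjTranspose_sub_mul_of_skew {S : Matrix n n ℂ} (hS : Sᴴ = -S)
    (C : Matrix n n ℂ) :
    (trace ((C - Cᴴ)ᴴ * S)).re = -2 * (trace (C * S)).re := by
  rw [conjTranspose_sub, conjTranspose_conjTranspose, sub_mul, trace_sub,
    trace_conjTranspose_mul_of_skew hS, Complex.sub_re, Complex.neg_re, Complex.star_def,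
    Complex.conj_re]
  ring

theorem conjTranspose_mul_mul_of_mem_unitaryGroup {α : Type*} [CommRing α] [StarRing α]
    [DecidableEq n] {U : Matrix n n α} (hU : U ∈ unitaryGroup n α) (X Y : Matrix n n α) :
    (U * X)ᴴ * (U * Y) = Xᴴ * Y := by
  rw [conjTranspose_mul, Matrix.mul_assoc, ← Matrix.mul_assoc Uᴴ, ← star_eq_conjTranspose U,
    Unitary.star_mul_self_of_mem hU, Matrix.one_mul]

theorem IsHermitian.mul_eq_conjTranspose_mul_iff {α : Type*} [CommRing α] [StarRing α]
    {M : Matrix n n α} (hM : M.IsHermitian) (Z : Matrix n n α) :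
    M * Z = Zᴴ * M ↔ (M * Z).IsHermitian := by
  rw [IsHermitian, conjTranspose_mul, hM.eq, eq_comm]

theorem IsHermitian.mul_phase_smul_eq_iff {M : Matrix n n ℂ} (hM : M.IsHermitian)
    {z : ℂ} (hz : z ≠ 0) (X : Matrix n n ℂ) :
    M * ((z / (‖z‖ : ℂ)) • X) = ((z / (‖z‖ : ℂ)) • X)ᴴ * M ↔
      (z • (M * X)).IsHermitian := by
  have hscale : M * ((z / (‖z‖ : ℂ)) • X) = (‖z‖⁻¹ : ℝ) • z • (M * X) := by
    rw [Matrix.mul_smul, ← Complex.coe_smul, smul_smul, div_eq_inv_mul, Complex.ofReal_inv]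
  rw [hM.mul_eq_conjTranspose_mul_iff, hscale, isHermitian_iff_isSelfAdjoint,
    isHermitian_iff_isSelfAdjoint, IsSelfAdjoint.smul_iff (.all _) (by simpa using hz)]

end Matrix

section Landscape

variable {n : Type*} [Fintype n]

noncomputable def phasedOverlap (A W U : Matrix n n ℂ) : Matrix n n ℂ :=
  trace (Uᴴ * W * A * Aᴴ) • (A * Aᴴ * (Wᴴ * U))

theorem trace_conjTranspose_overlap (A W U : Matrix n n ℂ) :
    trace (Uᴴ * W * A * Aᴴ) = star (trace (A * Aᴴ * Wᴴ * U)) := by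
  simp [← trace_conjTranspose, conjTranspose_mul, Matrix.mul_assoc]

theorem phasedOverlap_conjTranspose (A W U : Matrix n n ℂ) :
    (phasedOverlap A W U)ᴴ = trace (A * Aᴴ * Wᴴ * U) • (Uᴴ * W * A * Aᴴ) := by
  rw [phasedOverlap, conjTranspose_smul, trace_conjTranspose_overlap, star_star]
  simp [conjTranspose_mul, Matrix.mul_assoc]

theorem hasDerivAt_JP_mul_exp {N : ℕ} (A W U S : Matrix (Fin N) (Fin N) ℂ) :
    HasDerivAt (fun t : ℝ => JP A W (U * NormedSpace.exp (t • S)))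
      (-2 * (trace (phasedOverlap A W U * S)).re) 0 := by
  have h := ((hasDerivAt_trace_mul_exp_smul (A * Aᴴ * Wᴴ * U) S).norm_sq).const_sub
    ((trace (Aᴴ * A)).re ^ 2)
  refine (h.congr_deriv ?_).congr_of_eventuallyEq
    (.of_forall fun t => by simp only [JP, Matrix.mul_assoc])
  rw [phasedOverlap, trace_conjTranspose_overlap, Matrix.smul_mul, trace_smul, smul_eq_mul,
    zero_smul, NormedSpace.exp_zero, Matrix.mul_one, Complex.inner, Complex.star_def,
    mul_comm (starRingEnd ℂ _)]
  simp only [Matrix.mul_assoc]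
  ring

theorem gradient_eq_mul_sub_conjTranspose [DecidableEq n] {U : Matrix n n ℂ}
    (hU : U ∈ unitaryGroup n ℂ) (A W : Matrix n n ℂ) :
    trace (Uᴴ * W * A * Aᴴ) • (U * A * Aᴴ * Wᴴ * U) -
        trace (A * Aᴴ * Wᴴ * U) • (W * A * Aᴴ) =
      U * (phasedOverlap A W U - (phasedOverlap A W U)ᴴ) := by
  have hUU : U * Uᴴ = 1 := by rw [← star_eq_conjTranspose, Unitary.mul_star_self_of_mem hU]
  rw [phasedOverlap_conjTranspose, phasedOverlap, Matrix.mul_sub, Matrix.mul_smul,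
    Matrix.mul_smul]
  simp only [← Matrix.mul_assoc, hUU, Matrix.one_mul]

end Landscape

theorem stmt14_general (N : ℕ) (A W : Matrix (Fin N) (Fin N) ℂ)
    (U : Matrix (Fin N) (Fin N) ℂ) (hU : U ∈ Matrix.unitaryGroup (Fin N) ℂ)
    -- the claimed Riemannian gradient of J_P at U
    (G : Matrix (Fin N) (Fin N) ℂ)
    (hG : G = Matrix.trace (Uᴴ * W * A * Aᴴ) • (U * A * Aᴴ * Wᴴ * U) -
      Matrix.trace (A * Aᴴ * Wᴴ * U) • (W * A * Aᴴ)) :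
    -- G is the gradient: for every tangent direction US (S skew-Hermitian),
    -- the derivative of J_P along U e^{tS} equals ⟨G, US⟩ = Re Tr(G† U S)
    (∀ S : Matrix (Fin N) (Fin N) ℂ, Sᴴ = -S →
      deriv (fun t : ℝ => JP A W (U * NormedSpace.exp (t • S))) 0 =
        (Matrix.trace (Gᴴ * (U * S))).re) ∧
    -- if Tr(U†WAA†) ≠ 0 then grad J_P(U) = 0 iff AA†Z = Z†AA† for
    -- Z = (Tr(U†WAA†)/|Tr(U†WAA†)|) W†U
    (Matrix.trace (Uᴴ * W * A * Aᴴ) ≠ 0 →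
      (G = 0 ↔
        A * Aᴴ * ((Matrix.trace (Uᴴ * W * A * Aᴴ) /
            ((‖Matrix.trace (Uᴴ * W * A * Aᴴ)‖ : ℝ) : ℂ)) • (Wᴴ * U)) =
          ((Matrix.trace (Uᴴ * W * A * Aᴴ) /
            ((‖Matrix.trace (Uᴴ * W * A * Aᴴ)‖ : ℝ) : ℂ)) • (Wᴴ * U))ᴴ *
            (A * Aᴴ))) := by
  rw [gradient_eq_mul_sub_conjTranspose hU] at hG
  subst hG
  refine ⟨fun S hS => ?_, fun hτ => ?_⟩
  · rw [(hasDerivAt_JP_mul_exp A W U S).deriv, conjTranspose_mul_mul_of_mem_unitaryGroup hU,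
      re_trace_conjTranspose_sub_mul_of_skew hS]
  · rw [(isHermitian_mul_conjTranspose_self A).mul_phase_smul_eq_iff hτ, ← phasedOverlap,
      (Unitary.isUnit_coe (U := ⟨U, hU⟩)).mul_right_eq_zero, sub_eq_zero, IsHermitian, eq_comm]

theorem stmt14 (N : ℕ) (A W : Matrix (Fin N) (Fin N) ℂ)
    (hW : W ∈ Matrix.unitaryGroup (Fin N) ℂ)
    (U : Matrix (Fin N) (Fin N) ℂ) (hU : U ∈ Matrix.unitaryGroup (Fin N) ℂ)
    -- the claimed Riemannian gradient of J_P at U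
    (G : Matrix (Fin N) (Fin N) ℂ)
    (hG : G = Matrix.trace (Uᴴ * W * A * Aᴴ) • (U * A * Aᴴ * Wᴴ * U) -
      Matrix.trace (A * Aᴴ * Wᴴ * U) • (W * A * Aᴴ)) :
    -- G is the gradient: for every tangent direction US (S skew-Hermitian),
    -- the derivative of J_P along U e^{tS} equals ⟨G, US⟩ = Re Tr(G† U S)
    (∀ S : Matrix (Fin N) (Fin N) ℂ, Sᴴ = -S →
      deriv (fun t : ℝ => JP A W (U * NormedSpace.exp (t • S))) 0 =
        (Matrix.trace (Gᴴ * (U * S))).re) ∧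
    -- if Tr(U†WAA†) ≠ 0 then grad J_P(U) = 0 iff AA†Z = Z†AA† for
    -- Z = (Tr(U†WAA†)/|Tr(U†WAA†)|) W†U
    (Matrix.trace (Uᴴ * W * A * Aᴴ) ≠ 0 →
      (G = 0 ↔
        A * Aᴴ * ((Matrix.trace (Uᴴ * W * A * Aᴴ) /
            ((‖Matrix.trace (Uᴴ * W * A * Aᴴ)‖ : ℝ) : ℂ)) • (Wᴴ * U)) =
          ((Matrix.trace (Uᴴ * W * A * Aᴴ) /
            ((‖Matrix.trace (Uᴴ * W * A * Aᴴ)‖ : ℝ) : ℂ)) • (Wᴴ * U))ᴴ *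
            (A * Aᴴ))) :=
  stmt14_general N A W U hU G hG
end

section
/- Let V_T : L²(ℝ₊;ℝ) → U(N) be the final-time propagator map of the Schrödinger equation iħ dU/dt = (H₀ − μℰ(t))U, U(0) = I, with adjoint differential (d_ℰV_T)*(A)(t) = −Im Tr(A† V_T(ℰ) V_t(ℰ)† μ V_t(ℰ)). Then for every ℰ and every A ∈ T_{V_T(ℰ)}U(N), ‖(d_ℰV_T)*(A)‖_{L²} ≤ √T ‖μ‖ ‖A‖, and consequently for any smooth g : U(N) → ℝ, the gradient of g ∘ V_T is uniformly bounded over L²(ℝ₊;ℝ) by √T ‖μ‖ · max_{U∈U(N)} ‖grad g(U)‖. -/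
open Matrix MeasureTheory intervalIntegral

attribute [local instance] Matrix.frobeniusNormedAddCommGroup Matrix.frobeniusNormedSpace

/-- The Frobenius (Hilbert–Schmidt) norm of a complex matrix. -/
noncomputable def frobNorm {N : ℕ} (M : Matrix (Fin N) (Fin N) ℂ) : ℝ :=
  Real.sqrt ((Matrix.trace (Mᴴ * M)).re)

/-!
With the Frobenius norm, `trace (Aᴴ * B)` is the inner product of `A` and `B`, so by
Cauchy–Schwarz it is bounded by `‖A‖ * ‖B‖`, and the Frobenius norm is invariant under
multiplication by unitaries on either side. Hence the integrand of the adjoint differential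
is bounded by `‖A‖ * ‖μ‖` pointwise, which integrates to the `√T` bound. The uniform bound
follows because the unitary group is compact, so `‖grad g‖` is bounded on it.
-/

namespace Matrix

variable {𝕜 : Type*} [RCLike 𝕜] {m n : Type*} [Fintype m] [Fintype n]

/-- Flattening into a Hilbert space whose norm is, by definition, the Frobenius norm. -/
def toFrobeniusL2 (A : Matrix m n 𝕜) : PiLp 2 fun _ : m => EuclideanSpace 𝕜 n :=
  WithLp.toLp 2 fun i => WithLp.toLp 2 (A i)

lemma trace_conjTranspose_mul_eq_inner (A B : Matrix m n 𝕜) :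
    trace (Aᴴ * B) = inner 𝕜 A.toFrobeniusL2 B.toFrobeniusL2 := by
  simp only [trace, diag, mul_apply, conjTranspose_apply, PiLp.inner_apply, RCLike.inner_apply]
  rw [Finset.sum_comm]
  simp [toFrobeniusL2, mul_comm]

lemma norm_trace_conjTranspose_mul_le (A B : Matrix m n 𝕜) :
    ‖trace (Aᴴ * B)‖ ≤ ‖A‖ * ‖B‖ := by
  rw [trace_conjTranspose_mul_eq_inner]
  exact norm_inner_le_norm (𝕜 := 𝕜) _ _

lemma frobenius_norm_sq_eq_re_trace (A : Matrix m n 𝕜) :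
    ‖A‖ ^ 2 = RCLike.re (trace (Aᴴ * A)) := by
  rw [trace_conjTranspose_mul_eq_inner]
  exact norm_sq_eq_re_inner (𝕜 := 𝕜) A.toFrobeniusL2

lemma isCompact_unitaryGroup [DecidableEq n] :
    IsCompact (unitaryGroup n 𝕜 : Set (Matrix n n 𝕜)) := by
  have hball : IsCompact
      (Set.univ.pi fun _ : n => Set.univ.pi fun _ : n => Metric.closedBall (0 : 𝕜) 1) :=
    isCompact_univ_pi fun _ => isCompact_univ_pi fun _ => isCompact_closedBall 0 1
  refine hball.of_isClosed_subset (isClosed_unitary (R := Matrix n n 𝕜)) fun U hU i _ j _ => ?_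
  simpa using entry_norm_bound_of_unitary hU i j

instance compactSpace_unitaryGroup [DecidableEq n] : CompactSpace (unitaryGroup n 𝕜) :=
  isCompact_iff_compactSpace.mp isCompact_unitaryGroup

lemma frobenius_norm_unitary_mul [DecidableEq m] {U : Matrix m m 𝕜}
    (hU : U ∈ unitaryGroup m 𝕜) (A : Matrix m n 𝕜) : ‖U * A‖ = ‖A‖ := by
  have hUU : Uᴴ * U = 1 := mem_unitaryGroup_iff'.mp hU
  refine (sq_eq_sq₀ (norm_nonneg _) (norm_nonneg _)).mp ?_
  rw [frobenius_norm_sq_eq_re_trace, frobenius_norm_sq_eq_re_trace, conjTranspose_mul,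
    Matrix.mul_assoc, ← Matrix.mul_assoc Uᴴ, hUU, Matrix.one_mul]

lemma frobenius_norm_mul_unitary [DecidableEq n] (A : Matrix m n 𝕜) {U : Matrix n n 𝕜}
    (hU : U ∈ unitaryGroup n 𝕜) : ‖A * U‖ = ‖A‖ := by
  rw [← frobenius_norm_conjTranspose, conjTranspose_mul,
    frobenius_norm_unitary_mul (U := Uᴴ) (Unitary.star_mem hU), frobenius_norm_conjTranspose]

lemma norm_trace_conjTranspose_mul_unitary_mul_unitary_le [DecidableEq n]
    (A B : Matrix n n 𝕜) {U W : Matrix n n 𝕜} (hU : U ∈ unitaryGroup n 𝕜)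
    (hW : W ∈ unitaryGroup n 𝕜) : ‖trace (Aᴴ * U * B * W)‖ ≤ ‖A‖ * ‖B‖ := by
  have h := norm_trace_conjTranspose_mul_le A (U * B * W)
  rwa [frobenius_norm_mul_unitary _ hW, frobenius_norm_unitary_mul hU, ← Matrix.mul_assoc,
    ← Matrix.mul_assoc] at h

end Matrix

lemma sqrt_integral_sq_le {f : ℝ → ℝ} {a b C : ℝ} (hab : a ≤ b)
    (hf : IntervalIntegrable (fun t => f t ^ 2) volume a b) (hC : ∀ t ∈ Set.Icc a b, |f t| ≤ C) :
    √(∫ t in a..b, f t ^ 2) ≤ √(b - a) * C := by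
  have hC₀ : 0 ≤ C := (abs_nonneg _).trans (hC a ⟨le_rfl, hab⟩)
  have hsq : ∀ t ∈ Set.Icc a b, f t ^ 2 ≤ C ^ 2 := fun t ht => by
    simpa only [sq_abs] using pow_le_pow_left₀ (abs_nonneg _) (hC t ht) 2
  have hint : ∫ t in a..b, f t ^ 2 ≤ (b - a) * C ^ 2 := by
    simpa using integral_mono_on hab hf intervalIntegrable_const hsq
  calc √(∫ t in a..b, f t ^ 2) ≤ √((b - a) * C ^ 2) := Real.sqrt_le_sqrt hint
    _ = √(b - a) * C := by rw [Real.sqrt_mul (sub_nonneg.mpr hab), Real.sqrt_sq hC₀]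

lemma frobNorm_eq_norm {N : ℕ} (M : Matrix (Fin N) (Fin N) ℂ) : frobNorm M = ‖M‖ := by
  rw [frobNorm, ← RCLike.re_to_complex, ← frobenius_norm_sq_eq_re_trace,
    Real.sqrt_sq (norm_nonneg _)]

theorem stmt19_general (N : ℕ) (T hbar : ℝ) (hT : 0 < T)
    (H₀ μ : Matrix (Fin N) (Fin N) ℂ)
    -- the control field ℰ and the corresponding propagator t ↦ V_t(ℰ),
    -- solving ihbar dV/dt = (H₀ − ℰ(t)μ)V, V(0) = I
    (ℰ : ℝ → ℝ) (V : ℝ → Matrix (Fin N) (Fin N) ℂ)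
    (hVunitary : ∀ t, V t ∈ Matrix.unitaryGroup (Fin N) ℂ)
    (hschro : ∀ t : ℝ, HasDerivAt V
      (((-Complex.I / (hbar : ℂ))) • ((H₀ - ℰ t • μ) * V t)) t) :
    -- ‖(d_ℰV_T)*(A)‖_{L²} ≤ √T ‖μ‖ ‖A‖, where
    -- (d_ℰV_T)*(A)(t) = −Im Tr(A† V_T V_t† μ V_t)
    (∀ A : Matrix (Fin N) (Fin N) ℂ,
      Real.sqrt (∫ t in (0:ℝ)..T,
          (-(Matrix.trace (Aᴴ * V T * (V t)ᴴ * μ * V t)).im) ^ 2) ≤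
        Real.sqrt T * frobNorm μ * frobNorm A) ∧
    -- consequently, for any smooth kinematic gradient field grad g, the
    -- dynamical gradient (d_ℰV_T)*(grad g(V_T(ℰ))) is bounded uniformly by
    -- √T ‖μ‖ · max_{U ∈ U(N)} ‖grad g(U)‖
    (∀ gradG : Matrix (Fin N) (Fin N) ℂ → Matrix (Fin N) (Fin N) ℂ,
      Continuous gradG →
      Real.sqrt (∫ t in (0:ℝ)..T,
          (-(Matrix.trace ((gradG (V T))ᴴ * V T * (V t)ᴴ * μ * V t)).im) ^ 2) ≤
        Real.sqrt T * frobNorm μ *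
          ⨆ X : Matrix.unitaryGroup (Fin N) ℂ, frobNorm (gradG X)) := by
  simp only [frobNorm_eq_norm]
  have hV : Continuous V := continuous_iff_continuousAt.mpr fun t => (hschro t).continuousAt
  have adjoint_bound (A : Matrix (Fin N) (Fin N) ℂ) :
      √(∫ t in (0:ℝ)..T, (-(trace (Aᴴ * V T * (V t)ᴴ * μ * V t)).im) ^ 2) ≤
        √T * ‖μ‖ * ‖A‖ := by
    have hpt (t : ℝ) : |-(trace (Aᴴ * V T * (V t)ᴴ * μ * V t)).im| ≤ ‖A‖ * ‖μ‖ := by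
      rw [abs_neg, Matrix.mul_assoc Aᴴ]
      exact (Complex.abs_im_le_norm _).trans <|
        norm_trace_conjTranspose_mul_unitary_mul_unitary_le A μ
          (mul_mem (hVunitary T) (Unitary.star_mem (hVunitary t))) (hVunitary t)
    have hint : IntervalIntegrable
        (fun t => (-(trace (Aᴴ * V T * (V t)ᴴ * μ * V t)).im) ^ 2) volume 0 T :=
      Continuous.intervalIntegrable (by fun_prop) 0 T
    refine (sqrt_integral_sq_le hT.le hint fun t _ => hpt t).trans_eq ?_
    rw [sub_zero]
    ring
  refine ⟨adjoint_bound, fun gradG hg => (adjoint_bound _).trans ?_⟩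
  have hbdd : BddAbove (Set.range fun X : unitaryGroup (Fin N) ℂ => ‖gradG X‖) :=
    (isCompact_range (by fun_prop)).bddAbove
  exact mul_le_mul_of_nonneg_left (le_ciSup hbdd ⟨V T, hVunitary T⟩) (by positivity)

theorem stmt19 (N : ℕ) (T hbar : ℝ) (hT : 0 < T) (hhbarpos : 0 < hbar)
    (H₀ μ : Matrix (Fin N) (Fin N) ℂ) (hH₀ : H₀.IsHermitian) (hμ : μ.IsHermitian)
    -- the control field ℰ and the corresponding propagator t ↦ V_t(ℰ),
    -- solving ihbar dV/dt = (H₀ − ℰ(t)μ)V, V(0) = I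
    (ℰ : ℝ → ℝ) (V : ℝ → Matrix (Fin N) (Fin N) ℂ)
    (hV0 : V 0 = 1)
    (hVunitary : ∀ t, V t ∈ Matrix.unitaryGroup (Fin N) ℂ)
    (hschro : ∀ t : ℝ, HasDerivAt V
      (((-Complex.I / (hbar : ℂ))) • ((H₀ - ℰ t • μ) * V t)) t) :
    -- ‖(d_ℰV_T)*(A)‖_{L²} ≤ √T ‖μ‖ ‖A‖, where
    -- (d_ℰV_T)*(A)(t) = −Im Tr(A† V_T V_t† μ V_t)
    (∀ A : Matrix (Fin N) (Fin N) ℂ,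
      Real.sqrt (∫ t in (0:ℝ)..T,
          (-(Matrix.trace (Aᴴ * V T * (V t)ᴴ * μ * V t)).im) ^ 2) ≤
        Real.sqrt T * frobNorm μ * frobNorm A) ∧
    -- consequently, for any smooth kinematic gradient field grad g, the
    -- dynamical gradient (d_ℰV_T)*(grad g(V_T(ℰ))) is bounded uniformly by
    -- √T ‖μ‖ · max_{U ∈ U(N)} ‖grad g(U)‖
    (∀ gradG : Matrix (Fin N) (Fin N) ℂ → Matrix (Fin N) (Fin N) ℂ,
      Continuous gradG →
      Real.sqrt (∫ t in (0:ℝ)..T,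
          (-(Matrix.trace ((gradG (V T))ᴴ * V T * (V t)ᴴ * μ * V t)).im) ^ 2) ≤
        Real.sqrt T * frobNorm μ *
          ⨆ X : Matrix.unitaryGroup (Fin N) ℂ, frobNorm (gradG X)) :=
  stmt19_general N T hbar hT H₀ μ ℰ V hVunitary hschro
end
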